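/- In the lazy tournament of a trivalent tree T whose leaf edges a and b share a vertex (and n ≥ 1), neither a nor b ever competes in any round, every other label competes in at least one round, and whenever a label advances (is written on a new edge E) the edge E is the next edge along that label's current path toward the leaf a (Participation Lemma). -/

import Mathlib

open SimpleGraph

/-- A candidate leaf-labeled graph on vertex set `Fin V` with `L` labeled leaves. -/
structure PreTree (L V : ℕ) where
  adj : Fin V → Fin V → Bool
  symm' : ∀ u v, adj u v = adj v u
  loopless' : ∀ v, adj v v = false
  leaf : Fin L → Fin V

def PreTree.G {L V : ℕ} (T : PreTree L V) : SimpleGraph (Fin V) where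
  Adj u v := T.adj u v = true
  symm := ⟨fun u v h => by show T.adj v u = true; rw [T.symm']; exact h⟩
  loopless := ⟨fun v h => by have h : T.adj v v = true := h; rw [T.loopless' v] at h; exact Bool.noConfusion h⟩

instance {L V : ℕ} (T : PreTree L V) : DecidableRel T.G.Adj :=
  fun u v => inferInstanceAs (Decidable (T.adj u v = true))

/-- `T` is a trivalent tree with leaves labeled bijectively by `Fin L`. -/
def PreTree.IsTrivalent {L V : ℕ} (T : PreTree L V) : Prop :=
  T.G.IsTree ∧ (∀ v, T.G.degree v = 1 ∨ T.G.degree v = 3) ∧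
    Function.Injective T.leaf ∧ (∀ i, T.G.degree (T.leaf i) = 1) ∧
    (∀ v, T.G.degree v = 1 → ∃ i, T.leaf i = v)

/-- Label-preserving isomorphism of leaf-labeled graphs. -/
def PreTree.Iso {L V : ℕ} (T T' : PreTree L V) : Prop :=
  ∃ σ : Fin V ≃ Fin V, (∀ u v, T'.adj (σ u) (σ v) = T.adj u v) ∧ ∀ i, σ (T.leaf i) = T'.leaf i

/-- Leaves `a = 0` and `b = 1` share a common (internal) vertex. -/
def PreTree.ABAdj {n V : ℕ} (T : PreTree (n+3) V) : Prop :=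
  ∃ v, T.G.Adj (T.leaf 0) v ∧ T.G.Adj (T.leaf 1) v

/-- Number of isomorphism classes of leaf-labeled graphs satisfying `P`. -/
noncomputable def classCount {L V : ℕ} (P : PreTree L V → Prop) : ℕ :=
  Nat.card (Quot fun (T T' : {T : PreTree L V // P T}) => PreTree.Iso T.1 T'.1)

/-- `w` separates `x` from `y` in `G`: every walk from `x` to `y` passes through `w`. -/
def Separates {V : Type*} (G : SimpleGraph V) (w x y : V) : Prop :=
  ∀ p : G.Walk x y, w ∈ p.support

/-- The laziness rule applies: the unlabeled edge `E` is adjacent to a labeled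
edge carrying a label `u ≠ j` with `u > i`. -/
def LazyApplies {n : ℕ} (T : PreTree (n+3) (2*n+4))
    (lab : Sym2 (Fin (2*n+4)) → Option (Fin (n+3)))
    (E : Sym2 (Fin (2*n+4))) (i j : Fin (n+3)) : Prop :=
  ∃ (e : Sym2 (Fin (2*n+4))) (u : Fin (n+3)) (v : Fin (2*n+4)),
    e ∈ T.G.edgeSet ∧ v ∈ e ∧ v ∈ E ∧ e ≠ E ∧ lab e = some u ∧ u ≠ j ∧ i < u

/-- A run of the lazy tournament on a tree with `n+3` leaves (labels ordered
`a = 0 < b = 1 < c = 2 < 1 = 3 < ⋯ < n = n+2` as elements of `Fin (n+3)`).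
`lab t` is the edge labeling before round `t`; round `t` has `loser t < winner t`
on adjacent labeled edges `loserE t`, `winnerE t` sharing vertex `vtx t` with the
unlabeled edge `newE t`, the pair having the maximal smaller label, and `newE t`
gets labeled according to the laziness rule. -/
structure Run (n : ℕ) (T : PreTree (n+3) (2*n+4)) where
  lab : ℕ → Sym2 (Fin (2*n+4)) → Option (Fin (n+3))
  loser : Fin n → Fin (n+3)
  winner : Fin n → Fin (n+3)
  loserE : Fin n → Sym2 (Fin (2*n+4))
  winnerE : Fin n → Sym2 (Fin (2*n+4))
  newE : Fin n → Sym2 (Fin (2*n+4))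
  vtx : Fin n → Fin (2*n+4)
  init_leaf : ∀ (i : Fin (n+3)) (w : Fin (2*n+4)), T.G.Adj (T.leaf i) w →
    lab 0 s(T.leaf i, w) = some i
  init_other : ∀ e : Sym2 (Fin (2*n+4)), (∀ i : Fin (n+3), T.leaf i ∉ e) → lab 0 e = none
  init_nonedge : ∀ e, e ∉ T.G.edgeSet → lab 0 e = none
  lt_lw : ∀ t, loser t < winner t
  loserE_mem : ∀ t, loserE t ∈ T.G.edgeSet
  winnerE_mem : ∀ t, winnerE t ∈ T.G.edgeSet
  newE_mem : ∀ t, newE t ∈ T.G.edgeSet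
  lab_loserE : ∀ t, lab t.1 (loserE t) = some (loser t)
  lab_winnerE : ∀ t, lab t.1 (winnerE t) = some (winner t)
  vtx_mem : ∀ t, vtx t ∈ loserE t ∧ vtx t ∈ winnerE t ∧ vtx t ∈ newE t
  edges_distinct : ∀ t, loserE t ≠ winnerE t ∧ loserE t ≠ newE t ∧ winnerE t ≠ newE t
  newE_unlabeled : ∀ t, lab t.1 (newE t) = none
  max_rule : ∀ (t : Fin n) (e1 e2 e3 : Sym2 (Fin (2*n+4))) (i j : Fin (n+3)) (v : Fin (2*n+4)),
    e1 ∈ T.G.edgeSet → e2 ∈ T.G.edgeSet → e3 ∈ T.G.edgeSet →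
    lab t.1 e1 = some i → lab t.1 e2 = some j → lab t.1 e3 = none → i < j →
    v ∈ e1 → v ∈ e2 → v ∈ e3 → e1 ≠ e2 → e1 ≠ e3 → e2 ≠ e3 →
    i ≤ loser t
  step_lazy : ∀ t : Fin n, LazyApplies T (lab t.1) (newE t) (loser t) (winner t) →
    lab (t.1+1) (newE t) = some (loser t)
  step_nonlazy : ∀ t : Fin n, ¬ LazyApplies T (lab t.1) (newE t) (loser t) (winner t) →
    lab (t.1+1) (newE t) = some (winner t)
  step_frame : ∀ (t : Fin n) (e : Sym2 (Fin (2*n+4))), e ≠ newE t → lab (t.1+1) e = lab t.1 e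

/-- Number of rounds won by label `i`. -/
def Run.wins {n : ℕ} {T : PreTree (n+3) (2*n+4)} (R : Run n T) (i : Fin (n+3)) : ℕ :=
  (Finset.univ.filter fun t : Fin n => R.winner t = i).card

/-- The element of `Fin (n+3)` corresponding to the numeric label `m+1 ∈ {1,…,n}`. -/
def lbl {n : ℕ} (m : Fin n) : Fin (n+3) := ⟨(m:ℕ)+3, by omega⟩

/-- `T ∈ Tour(k₁,…,kₙ)`. -/
def InTour {n : ℕ} (k : Fin n → ℕ) (T : PreTree (n+3) (2*n+4)) : Prop :=
  T.IsTrivalent ∧ T.ABAdj ∧ ∃ R : Run n T, ∀ m : Fin n, R.wins (lbl m) = k m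

/-- `|Tour(k₁,…,kₙ)|` (isomorphism classes). -/
noncomputable def TourCount {n : ℕ} (k : Fin n → ℕ) : ℕ := classCount (InTour k)

/-- `T'` is obtained from `T` by deleting the largest leaf and suppressing
the resulting degree-2 vertex `w`. -/
def DelLast (n : ℕ) (T : PreTree ((n+1)+3) (2*(n+1)+4)) (T' : PreTree (n+3) (2*n+4)) : Prop :=
  ∃ (g : Fin (2*n+4) → Fin (2*(n+1)+4)) (w : Fin (2*(n+1)+4)),
    Function.Injective g ∧
    T.G.Adj (T.leaf (Fin.last (n+3))) w ∧
    (∀ v, v ∈ Set.range g ↔ (v ≠ T.leaf (Fin.last (n+3)) ∧ v ≠ w)) ∧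
    (∀ u u' : Fin (2*n+4), T'.G.Adj u u' ↔
      (T.G.Adj (g u) (g u') ∨ (T.G.Adj (g u) w ∧ T.G.Adj (g u') w ∧ g u ≠ g u'))) ∧
    (∀ i : Fin (n+3), g (T'.leaf i) = T.leaf (Fin.castSucc i))

/-- `T'` is obtained from `T` by successively deleting the leaves `r+1, …, n`. -/
inductive Restricts : (n : ℕ) → (r : ℕ) → PreTree (n+3) (2*n+4) → PreTree (r+3) (2*r+4) → Prop
  | refl (n : ℕ) (T : PreTree (n+3) (2*n+4)) : Restricts n n T T
  | step (n r : ℕ) (T : PreTree ((n+1)+3) (2*(n+1)+4)) (T1 : PreTree (n+3) (2*n+4))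
      (T2 : PreTree (r+3) (2*r+4)) :
      DelLast n T T1 → Restricts n r T1 T2 → Restricts (n+1) r T T2

/-- The composition `k̃_j`: decrement `k j` and delete position `dpos`
(the rightmost zero of the result). -/
def tilde {n : ℕ} (k : Fin (n+1) → ℕ) (dpos : ℕ) (j : Fin (n+1)) : Fin n → ℕ :=
  fun m => if (m:ℕ) < dpos then Function.update k j (k j - 1) (Fin.castSucc m)
           else Function.update k j (k j - 1) (Fin.succ m)

/-- The map `π_lazy` relates `T` to the pair `(j, T')` where `j` is the winner of the
first round of the tournament, the two leaves that competed are deleted (the shared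
vertex becoming a new leaf) and the labels are shifted according to the (non)lazy case. -/
def PiLazyRel (n : ℕ) (k : Fin (n+1) → ℕ) (T : PreTree ((n+1)+3) (2*(n+1)+4))
    (j : Fin (n+1)) (T' : PreTree (n+3) (2*n+4)) : Prop :=
  ∃ (R : Run (n+1) T) (g : Fin (2*n+4) → Fin (2*(n+1)+4)),
    (∀ m : Fin (n+1), R.wins (lbl m) = k m) ∧
    R.winner ⟨0, Nat.succ_pos n⟩ = lbl j ∧
    Function.Injective g ∧
    (∀ v, v ∈ Set.range g ↔
      (v ≠ T.leaf (R.loser ⟨0, Nat.succ_pos n⟩) ∧ v ≠ T.leaf (R.winner ⟨0, Nat.succ_pos n⟩))) ∧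
    (∀ u u' : Fin (2*n+4), T'.G.Adj u u' ↔ T.G.Adj (g u) (g u')) ∧
    (if k j = 1 then
      ∀ β : Fin (n+3), g (T'.leaf β) =
        (if (β:ℕ) = ((R.loser ⟨0, Nat.succ_pos n⟩) : ℕ) then R.vtx ⟨0, Nat.succ_pos n⟩
         else if (β:ℕ) < ((R.winner ⟨0, Nat.succ_pos n⟩) : ℕ) then T.leaf (Fin.castSucc β)
         else T.leaf (Fin.succ β))
     else
      ∀ β : Fin (n+3), g (T'.leaf β) =
        (if (β:ℕ) < ((R.loser ⟨0, Nat.succ_pos n⟩) : ℕ) then T.leaf (Fin.castSucc β)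
         else if (β:ℕ)+1 = ((R.winner ⟨0, Nat.succ_pos n⟩) : ℕ) then R.vtx ⟨0, Nat.succ_pos n⟩
         else T.leaf (Fin.succ β)))

/-! ### Parking functions.
A parking function of size `n` is encoded by `col : Fin n → Fin n`, where `col x` is the
(0-indexed) column of the label `x+1`; the Dyck path condition (for paths from `(0,n)` to
`(n,0)` staying weakly above the diagonal, cells left of down steps) is `IsPF`. -/

def IsPF {n : ℕ} (col : Fin n → Fin n) : Prop :=
  ∀ j : Fin n, n - (j:ℕ) ≤ (Finset.univ.filter fun x => j ≤ col x).card

/-- Dominance index of label `x+1`: the number of columns strictly to its right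
containing no entry greater than `x+1` (empty columns count). -/
def domIdx {n : ℕ} (col : Fin n → Fin n) (x : Fin n) : ℕ :=
  (Finset.univ.filter fun j : Fin n => col x < j ∧ ∀ y, col y = j → y ≤ x).card

/-- Column-restricted: `x > d_x` for all labels `x` (label `x : Fin n` has value `x+1`). -/
def ColRes {n : ℕ} (col : Fin n → Fin n) : Prop := ∀ x : Fin n, domIdx col x < (x:ℕ) + 1

/-- Number of labels in column `j`. -/
def colCount {n : ℕ} (col : Fin n → Fin n) (j : Fin n) : ℕ :=
  (Finset.univ.filter fun x => col x = j).card

/-- `col'` is the image of `col` under the map `r`: remove the row containing the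
label `1`, decrement the remaining labels, and delete the rightmost empty column `E`. -/
def RSpec {n : ℕ} (col : Fin (n+1) → Fin (n+1)) (col' : Fin n → Fin n) : Prop :=
  ∃ E : Fin (n+1),
    (∀ y : Fin (n+1), y ≠ 0 → col y ≠ E) ∧
    (∀ j : Fin (n+1), (∀ y, y ≠ 0 → col y ≠ j) → j ≤ E) ∧
    (∀ x : Fin n, (col' x : ℕ) =
      if (col (Fin.succ x) : ℕ) < (E:ℕ) then (col (Fin.succ x) : ℕ)
      else (col (Fin.succ x) : ℕ) - 1)

/-- `col` is the parking function `τ(T)`: column `col m` contains label `m+1`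
iff the label `col m + 1` wins round `m+1` of the lazy tournament of `T`. -/
def TauRel {n : ℕ} (T : PreTree (n+3) (2*n+4)) (col : Fin n → Fin n) : Prop :=
  ∃ R : Run n T, ∀ t : Fin n, ((R.winner t) : ℕ) = (col t : ℕ) + 3
/-!
Root the tree at the leaf `a` and name each edge by its endpoint farther from `a`. By induction
over the rounds, label `a` stays on the edge at `a`, and every other label `i` occupies an initial
segment of the path from the leaf `i` towards `a`, short of the edge at `a`. In each round a
deepest unlabeled edge lies below two labeled edges; their labels are distinct and exceed `b`, so
the maximality rule keeps `a` and `b` out of the competition. At the vertex of the round the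
three edges are the two competing ones and the new one, and a competing edge cannot be the edge
above the vertex, since its segment would continue below it on a third labeled edge; so the new
edge is the next one towards `a` and the label written on it extends its segment. Finally the
`n + 3` leaf edges and the `n` rounds label all `2n + 3` edges, and the round labeling the edge
above the parent of the leaf `i` takes place next to the leaf edge of `i`; `n ≥ 1` ensures that
this parent is not the common neighbour of `a` and `b`.
-/

namespace SimpleGraph

variable {V : Type*} (G : SimpleGraph V) (r : V)

open Classical in
/-- The neighbour of `v` one step closer to the root `r`, or `v` itself if there is none
(that is, at `r`, or off the component of `r`). -/
noncomputable def parent (v : V) : V :=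
  if h : ∃ u, G.Adj v u ∧ G.dist r u + 1 = G.dist r v then h.choose else v

noncomputable def parentEdge (v : V) : Sym2 V := s(v, G.parent r v)

variable {G r} {u v c : V}

lemma Connected.exists_adj_dist_add_one_eq (hG : G.Connected) (hv : v ≠ r) :
    ∃ u, G.Adj v u ∧ G.dist r u + 1 = G.dist r v := by
  obtain ⟨p, hp⟩ := hG.exists_walk_length_eq_dist v r
  cases p with
  | nil => exact absurd rfl hv
  | cons h q =>
    refine ⟨_, h, ?_⟩
    have hq := dist_le q
    rw [Walk.length_cons] at hp
    rw [dist_comm] at hp hq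
    rcases h.diff_dist_adj (u := r) with h' | h' | h' <;> omega

lemma Connected.adj_parent (hG : G.Connected) (hv : v ≠ r) : G.Adj v (G.parent r v) := by
  have h := hG.exists_adj_dist_add_one_eq hv
  rw [parent, dif_pos h]
  exact h.choose_spec.1

lemma Connected.dist_parent (hG : G.Connected) (hv : v ≠ r) :
    G.dist r (G.parent r v) + 1 = G.dist r v := by
  have h := hG.exists_adj_dist_add_one_eq hv
  rw [parent, dif_pos h]
  exact h.choose_spec.2

lemma Connected.parent_ne (hG : G.Connected) (hv : v ≠ r) : G.parent r v ≠ v := by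
  intro h
  have := hG.dist_parent hv
  rw [h] at this
  omega

lemma Connected.parentEdge_mem_edgeSet (hG : G.Connected) (hv : v ≠ r) :
    G.parentEdge r v ∈ G.edgeSet :=
  hG.adj_parent hv

lemma mem_parentEdge_self : v ∈ G.parentEdge r v := Sym2.mem_mk_left _ _

lemma parent_mem_parentEdge : G.parent r v ∈ G.parentEdge r v := Sym2.mem_mk_right _ _

lemma IsTree.parent_eq_of_adj (hG : G.IsTree) (h : G.Adj v u)
    (hd : G.dist r u < G.dist r v) : G.parent r v = u := by
  have hv : v ≠ r := by rintro rfl; simp at hd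
  have hu : G.dist r u + 1 = G.dist r v := by
    have := hG.dist_eq_dist_add_one_of_adj r h; omega
  have hx := hG.connected.dist_parent hv
  -- two neighbours one step closer to `r` extend geodesics to paths `r ⟶ v`, hence coincide
  obtain ⟨p, -, hp⟩ := hG.connected.exists_path_of_dist r (G.parent r v)
  obtain ⟨q, -, hq⟩ := hG.connected.exists_path_of_dist r u
  have hp' := (p.concat (hG.connected.adj_parent hv).symm).isPath_of_length_eq_dist
    (by rw [Walk.length_concat]; omega)
  have hq' := (q.concat h.symm).isPath_of_length_eq_dist (by rw [Walk.length_concat]; omega)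
  have := congrArg (fun w : G.Path r v => w.1.penultimate)
    ((hG.isAcyclic.subsingleton_path r v).elim ⟨_, hp'⟩ ⟨_, hq'⟩)
  simpa only [Walk.penultimate_concat] using this

lemma IsTree.parent_eq_or (hG : G.IsTree) (h : G.Adj u v) :
    (u ≠ r ∧ G.parent r u = v) ∨ (v ≠ r ∧ G.parent r v = u) := by
  rcases hG.dist_eq_dist_add_one_of_adj r h with huv | hvu
  · refine .inl ⟨?_, hG.parent_eq_of_adj h (by omega)⟩
    rintro rfl; simp at huv
  · refine .inr ⟨?_, hG.parent_eq_of_adj h.symm (by omega)⟩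
    rintro rfl; simp at hvu

lemma IsTree.parent_eq_of_adj_of_ne_parent (hG : G.IsTree) (h : G.Adj v c)
    (hc : c ≠ G.parent r v) : c ≠ r ∧ G.parent r c = v := by
  rcases hG.parent_eq_or (r := r) h with ⟨-, hvc⟩ | hcv
  · exact absurd hvc.symm hc
  · exact hcv

lemma Connected.dist_iterate_parent (hG : G.Connected) {k : ℕ} (hk : k ≤ G.dist r v) :
    G.dist r ((G.parent r)^[k] v) = G.dist r v - k := by
  induction k with
  | zero => rfl
  | succ k ih =>
    have ih := ih (by omega)
    have hne : (G.parent r)^[k] v ≠ r := by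
      intro h; rw [h, dist_self] at ih; omega
    rw [Function.iterate_succ_apply']
    have := hG.dist_parent hne
    omega

lemma Connected.iterate_parent_ne_root (hG : G.Connected) {k : ℕ} (hk : k < G.dist r v) :
    (G.parent r)^[k] v ≠ r := by
  intro h
  have := hG.dist_iterate_parent (v := v) hk.le
  rw [h, dist_self] at this
  omega

lemma Connected.eq_of_iterate_parent_eq (hG : G.Connected) {k m : ℕ} (hk : k ≤ G.dist r v)
    (hm : m ≤ G.dist r v) (h : (G.parent r)^[k] v = (G.parent r)^[m] v) : k = m := by
  have hk' := hG.dist_iterate_parent hk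
  have hm' := hG.dist_iterate_parent hm
  rw [h] at hk'
  omega

lemma Connected.eq_of_parentEdge_eq (hG : G.Connected) (hu : u ≠ r) (hv : v ≠ r)
    (h : G.parentEdge r u = G.parentEdge r v) : u = v := by
  rcases Sym2.eq_iff.mp h with ⟨huv, -⟩ | ⟨hu', hv'⟩
  · exact huv
  · have h1 := hG.dist_parent hu
    have h2 := hG.dist_parent hv
    rw [← hu'] at h2
    rw [hv'] at h1
    omega

lemma IsTree.exists_parentEdge_eq (hG : G.IsTree) {e : Sym2 V} (he : e ∈ G.edgeSet) :
    ∃ v, v ≠ r ∧ G.parentEdge r v = e := by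
  induction e using Sym2.ind with
  | _ x y =>
    rcases hG.parent_eq_or (r := r) he with ⟨hx, hxy⟩ | ⟨hy, hyx⟩
    · exact ⟨x, hx, by rw [parentEdge, hxy]⟩
    · exact ⟨y, hy, by rw [parentEdge, hyx, Sym2.eq_swap]⟩

lemma IsTree.eq_parentEdge_or_of_mem (hG : G.IsTree) {e : Sym2 V} (he : e ∈ G.edgeSet)
    (hv : v ∈ e) : e = G.parentEdge r v ∨ ∃ c, c ≠ r ∧ G.parent r c = v ∧ e = G.parentEdge r c := by
  obtain ⟨u, hu, rfl⟩ := hG.exists_parentEdge_eq (r := r) he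
  rcases Sym2.mem_iff.mp hv with rfl | rfl
  · exact .inl rfl
  · exact .inr ⟨u, hu, rfl, rfl⟩

lemma IsTree.parentEdge_mem_edges (hG : G.IsTree) (hv : v ≠ r) {p : G.Walk v r}
    (hp : p.IsPath) : G.parentEdge r v ∈ p.edges := by
  obtain ⟨q, hq, hql⟩ := hG.connected.exists_path_of_dist v r
  obtain rfl : p = q := congrArg Subtype.val
    ((hG.isAcyclic.subsingleton_path v r).elim ⟨p, hp⟩ ⟨q, hq⟩)
  cases p with
  | nil => exact absurd rfl hv
  | cons h p =>
    have hd := dist_le p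
    rw [Walk.length_cons] at hql
    rw [dist_comm] at hd hql
    rw [parentEdge, hG.parent_eq_of_adj h (by omega)]
    exact List.mem_cons_self ..

lemma eq_of_adj_of_degree_eq_one [Fintype (G.neighborSet v)] (h1 : G.degree v = 1)
    (hu : G.Adj v u) (hc : G.Adj v c) : u = c :=
  (degree_eq_one_iff_existsUnique_adj.mp h1).unique hu hc

lemma IsTree.parent_eq_root_of_degree_eq_one [Fintype (G.neighborSet (G.parent r c))]
    (hG : G.IsTree) (hc : c ≠ r) (h1 : G.degree (G.parent r c) = 1) : G.parent r c = r := by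
  by_contra hx
  have hpx := eq_of_adj_of_degree_eq_one h1 (hG.connected.adj_parent hx)
    (hG.connected.adj_parent hc).symm
  have := hG.connected.dist_parent hx
  have := hG.connected.dist_parent hc
  rw [hpx] at *
  omega

lemma IsTree.exists_two_children [Fintype (G.neighborSet v)] (hG : G.IsTree)
    (hdeg : 2 < G.degree v) :
    ∃ c₁ c₂, c₁ ≠ c₂ ∧ c₁ ≠ r ∧ c₂ ≠ r ∧ G.parent r c₁ = v ∧ G.parent r c₂ = v := by
  classical
  have hcard : 1 < ((G.neighborFinset v).erase (G.parent r v)).card := by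
    have := Finset.pred_card_le_card_erase (s := G.neighborFinset v) (a := G.parent r v)
    rw [card_neighborFinset_eq_degree] at this
    omega
  obtain ⟨c₁, h₁, c₂, h₂, h₁₂⟩ := Finset.one_lt_card.mp hcard
  rw [Finset.mem_erase, mem_neighborFinset] at h₁ h₂
  obtain ⟨hr₁, hp₁⟩ := hG.parent_eq_of_adj_of_ne_parent h₁.2 h₁.1
  obtain ⟨hr₂, hp₂⟩ := hG.parent_eq_of_adj_of_ne_parent h₂.2 h₂.1
  exact ⟨c₁, c₂, h₁₂, hr₁, hr₂, hp₁, hp₂⟩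

section Incidence

variable [DecidableEq V] [Fintype (G.neighborSet v)] {e₁ e₂ e₃ : Sym2 V}
  (h₁ : e₁ ∈ G.incidenceSet v) (h₂ : e₂ ∈ G.incidenceSet v) (h₃ : e₃ ∈ G.incidenceSet v)
  (h₁₂ : e₁ ≠ e₂) (h₁₃ : e₁ ≠ e₃) (h₂₃ : e₂ ≠ e₃)
include h₁ h₂ h₃ h₁₂ h₁₃ h₂₃

lemma three_le_degree_of_mem_incidenceSet : 3 ≤ G.degree v := by
  rw [← card_incidenceFinset_eq_degree, ← Finset.card_eq_three.mpr ⟨e₁, e₂, e₃, h₁₂, h₁₃, h₂₃, rfl⟩]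
  refine Finset.card_le_card fun e he => ?_
  simp only [Finset.mem_insert, Finset.mem_singleton] at he
  rcases he with rfl | rfl | rfl <;> simpa

lemma eq_or_eq_or_eq_of_mem_incidenceSet (hdeg : G.degree v ≤ 3) {e : Sym2 V}
    (he : e ∈ G.incidenceSet v) : e = e₁ ∨ e = e₂ ∨ e = e₃ := by
  have hsub : ({e₁, e₂, e₃} : Finset (Sym2 V)) ⊆ G.incidenceFinset v := by
    intro e he
    simp only [Finset.mem_insert, Finset.mem_singleton] at he
    rcases he with rfl | rfl | rfl <;> simpa
  have heq := Finset.eq_of_subset_of_card_le hsub (by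
    rw [card_incidenceFinset_eq_degree, Finset.card_eq_three.mpr ⟨e₁, e₂, e₃, h₁₂, h₁₃, h₂₃, rfl⟩]
    exact hdeg)
  simpa [← heq] using (G.mem_incidenceFinset v e).mpr he

end Incidence

end SimpleGraph

namespace PreTree

section Trivalent

variable {L V : ℕ} {T : PreTree L V}

lemma IsTrivalent.isTree (hT : T.IsTrivalent) : T.G.IsTree := hT.1

lemma IsTrivalent.degree_eq_one_or_three (hT : T.IsTrivalent) (v : Fin V) :
    T.G.degree v = 1 ∨ T.G.degree v = 3 :=
  hT.2.1 v

lemma IsTrivalent.leaf_injective (hT : T.IsTrivalent) : Function.Injective T.leaf := hT.2.2.1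

lemma IsTrivalent.degree_leaf (hT : T.IsTrivalent) (i : Fin L) : T.G.degree (T.leaf i) = 1 :=
  hT.2.2.2.1 i

lemma IsTrivalent.exists_leaf_of_degree_eq_one (hT : T.IsTrivalent) {v : Fin V}
    (h : T.G.degree v = 1) : ∃ i, T.leaf i = v :=
  hT.2.2.2.2 v h

end Trivalent

section Rooted

variable {n V : ℕ} {T : PreTree (n+3) V} (hT : T.IsTrivalent)
include hT

local notation "ρ" => T.leaf 0
local notation "par" => T.G.parent (T.leaf 0)
local notation "up" => T.G.parentEdge (T.leaf 0)

lemma IsTrivalent.leaf_ne_root {i : Fin (n+3)} (hi : i ≠ 0) : T.leaf i ≠ ρ :=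
  fun h => hi (hT.leaf_injective h)

lemma IsTrivalent.parent_ne_leaf {c : Fin V} (hc : c ≠ ρ) (hpc : par c ≠ ρ) (m : Fin (n+3)) :
    par c ≠ T.leaf m := by
  intro h
  exact hpc (hT.isTree.parent_eq_root_of_degree_eq_one hc (h ▸ hT.degree_leaf m))

variable (hab : T.ABAdj)
include hab

lemma IsTrivalent.dist_leaf_one : T.G.dist ρ (T.leaf 1) = 2 := by
  obtain ⟨x, h0, h1⟩ := hab
  have hx : T.G.dist ρ x = 1 := dist_eq_one_iff_adj.mpr h0
  rcases hT.isTree.dist_eq_dist_add_one_of_adj ρ h1 with h | h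
  · omega
  · have h' : T.G.dist ρ (T.leaf 1) = 0 := by omega
    rw [hT.isTree.connected.dist_eq_zero_iff] at h'
    exact absurd (hT.leaf_injective h') (by simp)

lemma IsTrivalent.adj_root_parent_leaf_one : T.G.Adj ρ (par (T.leaf 1)) := by
  have hd := hT.dist_leaf_one hab
  obtain ⟨x, h0, h1⟩ := hab
  have hx : T.G.dist ρ x = 1 := dist_eq_one_iff_adj.mpr h0
  rwa [hT.isTree.parent_eq_of_adj h1 (by rw [hd, hx]; omega)]

lemma IsTrivalent.eq_parent_leaf_one_of_adj_root {x : Fin V} (h : T.G.Adj ρ x) :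
    x = par (T.leaf 1) :=
  eq_of_adj_of_degree_eq_one (hT.degree_leaf 0) h (hT.adj_root_parent_leaf_one hab)

lemma IsTrivalent.parent_leaf_one_ne_root : par (T.leaf 1) ≠ ρ :=
  (hT.adj_root_parent_leaf_one hab).ne.symm

lemma IsTrivalent.parent_parent_leaf_one : par (par (T.leaf 1)) = ρ :=
  hT.isTree.parent_eq_of_adj (hT.adj_root_parent_leaf_one hab).symm
    (by rw [dist_self, dist_eq_one_iff_adj.mpr (hT.adj_root_parent_leaf_one hab)]; omega)

lemma IsTrivalent.parent_leaf_one_ne_leaf (m : Fin (n+3)) : par (T.leaf 1) ≠ T.leaf m :=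
  hT.parent_ne_leaf (hT.leaf_ne_root (by simp)) (hT.parent_leaf_one_ne_root hab) m

lemma IsTrivalent.one_lt_dist_leaf {i : Fin (n+3)} (hi : i ≠ 0) : 1 < T.G.dist ρ (T.leaf i) := by
  have h0 := hT.isTree.connected.pos_dist_of_ne (hT.leaf_ne_root hi).symm
  have h1 : T.G.dist ρ (T.leaf i) ≠ 1 := fun h =>
    hT.parent_leaf_one_ne_leaf hab i (hT.eq_parent_leaf_one_of_adj_root hab
      (dist_eq_one_iff_adj.mp h)).symm
  omega

lemma IsTrivalent.eq_leaf_of_parent_eq_parent_leaf_one {i : Fin (n+3)} (hi0 : i ≠ 0)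
    (hi1 : i ≠ 1) (hw : par (T.leaf i) = par (T.leaf 1)) {x : Fin V} (hx : x ≠ ρ)
    (hpx : par x = par (T.leaf 1)) : x = T.leaf 1 ∨ x = T.leaf i := by
  have hconn := hT.isTree.connected
  have hw0 := hT.parent_leaf_one_ne_root hab
  have hb0 : T.leaf 1 ≠ ρ := hT.leaf_ne_root (by simp)
  have hi := hT.leaf_ne_root hi0
  have hinc : ∀ c, c ≠ ρ → par c = par (T.leaf 1) →
      up c ∈ T.G.incidenceSet (par (T.leaf 1)) :=
    fun c hc hpc => ⟨hconn.parentEdge_mem_edgeSet hc, hpc ▸ parent_mem_parentEdge⟩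
  have hne := fun {u v : Fin V} (hu : u ≠ ρ) (hv : v ≠ ρ) => mt (hconn.eq_of_parentEdge_eq hu hv)
  rcases eq_or_eq_or_eq_of_mem_incidenceSet
      ⟨hconn.parentEdge_mem_edgeSet hw0, mem_parentEdge_self⟩ (hinc _ hb0 rfl) (hinc _ hi hw)
      (hne hw0 hb0 (hT.parent_leaf_one_ne_leaf hab 1))
      (hne hw0 hi (hT.parent_leaf_one_ne_leaf hab i))
      (hne hb0 hi fun h => hi1 (hT.leaf_injective h).symm)
      (by rcases hT.degree_eq_one_or_three (par (T.leaf 1)) with h | h <;> omega)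
      (hinc _ hx hpx) with h | h | h
  · exact absurd (hpx.trans (hconn.eq_of_parentEdge_eq hx hw0 h).symm) (hconn.parent_ne hx)
  · exact .inl (hconn.eq_of_parentEdge_eq hx hb0 h)
  · exact .inr (hconn.eq_of_parentEdge_eq hx hi h)

lemma IsTrivalent.parent_leaf_ne_parent_leaf_one (hn : 1 ≤ n) {i : Fin (n+3)} (hi0 : i ≠ 0)
    (hi1 : i ≠ 1) : par (T.leaf i) ≠ par (T.leaf 1) := by
  intro hw
  have hconn := hT.isTree.connected
  obtain ⟨j, -, hj⟩ := Finset.exists_mem_notMem_of_card_lt_card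
    (s := {0, 1, i}) (t := Finset.univ) (by
      rw [Finset.card_univ, Fintype.card_fin]
      exact (Finset.card_le_three).trans_lt (by omega))
  simp only [Finset.mem_insert, Finset.mem_singleton, not_or] at hj
  obtain ⟨hj0, hj1, hji⟩ := hj
  -- the vertex two steps below `a` on the path from the leaf `j` is a child of `par b`,
  -- hence one of the leaves `b`, `i`; but a leaf other than `j` cannot lie on that path
  obtain ⟨k, hk⟩ : ∃ k, T.G.dist ρ (T.leaf j) = k + 2 :=
    ⟨_, (Nat.sub_add_cancel (hT.one_lt_dist_leaf hab hj0)).symm⟩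
  have hx : par^[k] (T.leaf j) ≠ ρ := hconn.iterate_parent_ne_root (by omega)
  have hpx : par (par^[k] (T.leaf j)) = par (T.leaf 1) := by
    refine hT.eq_parent_leaf_one_of_adj_root hab (dist_eq_one_iff_adj.mp ?_)
    rw [← Function.iterate_succ_apply' (T.G.parent ρ), hconn.dist_iterate_parent (by omega)]
    omega
  obtain ⟨m, hxm, hm⟩ : ∃ m, par^[k] (T.leaf j) = T.leaf m ∧ m ≠ j := by
    rcases hT.eq_leaf_of_parent_eq_parent_leaf_one hab hi0 hi1 hw hx hpx with h | h
    · exact ⟨1, h, Ne.symm hj1⟩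
    · exact ⟨i, h, Ne.symm hji⟩
  rcases k with _ | k
  · exact hm (hT.leaf_injective hxm).symm
  · rw [Function.iterate_succ_apply'] at hxm hx
    exact hT.parent_ne_leaf (hconn.iterate_parent_ne_root (by omega)) hx m hxm

end Rooted

end PreTree

namespace Run

variable {n : ℕ} {T : PreTree (n+3) (2*n+4)} (R : Run n T)

local notation "ρ" => T.leaf 0
local notation "par" => T.G.parent (T.leaf 0)
local notation "up" => T.G.parentEdge (T.leaf 0)

section Labeled

lemma lab_succ_newE_ne_none (t : Fin n) : R.lab (t.1+1) (R.newE t) ≠ none := by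
  by_cases h : LazyApplies T (R.lab t.1) (R.newE t) (R.loser t) (R.winner t)
  · simp [R.step_lazy t h]
  · simp [R.step_nonlazy t h]

lemma lab_eq_none_of_notMem_edgeSet {t : ℕ} (ht : t ≤ n) {e : Sym2 (Fin (2*n+4))}
    (he : e ∉ T.G.edgeSet) : R.lab t e = none := by
  induction t with
  | zero => exact R.init_nonedge e he
  | succ t ih =>
    rw [R.step_frame ⟨t, by omega⟩ e fun h => he (h ▸ R.newE_mem _)]
    exact ih (by omega)

lemma lab_eq_lab_zero_of_ne_newE {e : Sym2 (Fin (2*n+4))} (he : ∀ s, R.newE s ≠ e) {t : ℕ}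
    (ht : t ≤ n) : R.lab t e = R.lab 0 e := by
  induction t with
  | zero => rfl
  | succ t ih => rw [R.step_frame ⟨t, by omega⟩ e (he _).symm, ih (by omega)]

def labeled (t : ℕ) : Finset (Sym2 (Fin (2*n+4))) :=
  Finset.univ.filter fun e => R.lab t e ≠ none

lemma card_labeled {t : ℕ} (ht : t ≤ n) : (R.labeled t).card = (R.labeled 0).card + t := by
  induction t with
  | zero => rfl
  | succ t ih =>
    have hins : R.labeled (t+1) = insert (R.newE ⟨t, by omega⟩) (R.labeled t) := by
      ext e
      by_cases he : e = R.newE ⟨t, by omega⟩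
      · subst he; simpa [labeled] using R.lab_succ_newE_ne_none ⟨t, by omega⟩
      · simp [labeled, he, R.step_frame _ e he]
    have hnew : R.newE ⟨t, by omega⟩ ∉ R.labeled t := by
      simpa [labeled] using R.newE_unlabeled ⟨t, by omega⟩
    rw [hins, Finset.card_insert_of_notMem hnew, ih (by omega)]
    rfl

variable {R}

lemma card_labeled_zero (hT : T.IsTrivalent) : n + 3 ≤ (R.labeled 0).card := by
  have hnbr : ∀ i, ∃ x, T.G.Adj (T.leaf i) x := fun i =>
    (T.G.degree_pos_iff_exists_adj _).mp (by rw [hT.degree_leaf]; omega)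
  choose x hx using hnbr
  -- the edge at leaf `i` is initially labeled `i`, so these `n + 3` edges are distinct
  have hlab : ∀ i, R.lab 0 s(T.leaf i, x i) = some i := fun i => R.init_leaf i _ (hx i)
  calc n + 3 = (Finset.univ : Finset (Fin (n+3))).card := by simp
    _ ≤ _ := Finset.card_le_card_of_injOn (fun i => s(T.leaf i, x i))
        (fun i _ => by simp [labeled, hlab])
        (fun i _ j _ h =>
          Option.some.inj ((hlab i).symm.trans ((congrArg (R.lab 0) h).trans (hlab j))))

lemma lab_ne_none_of_mem_edgeSet (hT : T.IsTrivalent) {e : Sym2 (Fin (2*n+4))}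
    (he : e ∈ T.G.edgeSet) : R.lab n e ≠ none := by
  have hsub : R.labeled n ⊆ T.G.edgeFinset := fun e' he' => by
    rw [mem_edgeFinset]
    by_contra h
    simp [labeled, R.lab_eq_none_of_notMem_edgeSet le_rfl h] at he'
  have hedges := hT.isTree.card_edgeFinset
  rw [Fintype.card_fin] at hedges
  have heq := Finset.eq_of_subset_of_card_le hsub
    (by rw [R.card_labeled le_rfl]; have := card_labeled_zero (R := R) hT; omega)
  have : e ∈ R.labeled n := heq ▸ (mem_edgeFinset.mpr he)
  simpa [labeled] using this

lemma exists_newE_eq (hT : T.IsTrivalent) {e : Sym2 (Fin (2*n+4))} (he : e ∈ T.G.edgeSet)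
    (h0 : R.lab 0 e = none) : ∃ s, R.newE s = e := by
  by_contra! hne
  exact lab_ne_none_of_mem_edgeSet hT he (h0 ▸ R.lab_eq_lab_zero_of_ne_newE hne le_rfl)

end Labeled

section Round

lemma three_le_degree_vtx (t : Fin n) : 3 ≤ T.G.degree (R.vtx t) :=
  three_le_degree_of_mem_incidenceSet ⟨R.loserE_mem t, (R.vtx_mem t).1⟩
    ⟨R.winnerE_mem t, (R.vtx_mem t).2.1⟩ ⟨R.newE_mem t, (R.vtx_mem t).2.2⟩
    (R.edges_distinct t).1 (R.edges_distinct t).2.1 (R.edges_distinct t).2.2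

variable (hT : T.IsTrivalent) (t : Fin n)
include hT

lemma vtx_ne_root : R.vtx t ≠ ρ := by
  intro h
  have := R.three_le_degree_vtx t
  rw [h, hT.degree_leaf] at this
  omega

lemma vtx_ne_leaf (i : Fin (n+3)) : R.vtx t ≠ T.leaf i := by
  intro h
  have := R.three_le_degree_vtx t
  rw [h, hT.degree_leaf] at this
  omega

lemma eq_loserE_or_eq_winnerE_or_eq_newE {e : Sym2 (Fin (2*n+4))} (he : e ∈ T.G.edgeSet)
    (hv : R.vtx t ∈ e) : e = R.loserE t ∨ e = R.winnerE t ∨ e = R.newE t :=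
  eq_or_eq_or_eq_of_mem_incidenceSet ⟨R.loserE_mem t, (R.vtx_mem t).1⟩
    ⟨R.winnerE_mem t, (R.vtx_mem t).2.1⟩ ⟨R.newE_mem t, (R.vtx_mem t).2.2⟩
    (R.edges_distinct t).1 (R.edges_distinct t).2.1 (R.edges_distinct t).2.2
    (by rcases hT.degree_eq_one_or_three (R.vtx t) with h | h <;> omega) ⟨he, hv⟩

lemma lab_eq_loser_or_winner {e : Sym2 (Fin (2*n+4))} (he : e ∈ T.G.edgeSet)
    (hv : R.vtx t ∈ e) {i : Fin (n+3)} (hi : R.lab t e = some i) :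
    (e = R.loserE t ∧ i = R.loser t) ∨ (e = R.winnerE t ∧ i = R.winner t) := by
  rcases R.eq_loserE_or_eq_winnerE_or_eq_newE hT t he hv with rfl | rfl | rfl
  · exact .inl ⟨rfl, Option.some.inj (hi.symm.trans (R.lab_loserE t))⟩
  · exact .inr ⟨rfl, Option.some.inj (hi.symm.trans (R.lab_winnerE t))⟩
  · simp [R.newE_unlabeled] at hi

lemma exists_deepest_unlabeled : ∃ v, v ≠ ρ ∧ R.lab t (up v) = none ∧
    ∀ c, c ≠ ρ → par c = v → R.lab t (up c) ≠ none := by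
  classical
  let U := Finset.univ.filter fun v => v ≠ ρ ∧ R.lab t (up v) = none
  obtain ⟨v₀, hv₀, he₀⟩ := hT.isTree.exists_parentEdge_eq (r := ρ) (R.newE_mem t)
  obtain ⟨v, hvU, hmax⟩ := U.exists_max_image (T.G.dist ρ)
    ⟨v₀, by simpa [U, hv₀, he₀] using R.newE_unlabeled t⟩
  simp only [U, Finset.mem_filter, Finset.mem_univ, true_and, and_imp] at hvU hmax
  refine ⟨v, hvU.1, hvU.2, fun c hc hpc h => ?_⟩
  have := hmax c hc h
  have := hT.isTree.connected.dist_parent hc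
  rw [hpc] at this
  omega

lemma le_loser_of_parent_eq {v c₁ c₂ : Fin (2*n+4)} (hv : v ≠ ρ) (hc₁ : c₁ ≠ ρ) (hc₂ : c₂ ≠ ρ)
    (h₁₂ : c₁ ≠ c₂) (hp₁ : par c₁ = v) (hp₂ : par c₂ = v) {i₁ i₂ : Fin (n+3)}
    (hi₁ : R.lab t (up c₁) = some i₁) (hi₂ : R.lab t (up c₂) = some i₂) (hlt : i₁ < i₂)
    (hnone : R.lab t (up v) = none) : i₁ ≤ R.loser t := by
  have hconn := hT.isTree.connected
  have hup : ∀ c, c ≠ ρ → par c = v → up c ≠ up v := fun c hc hpc h =>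
    hconn.parent_ne hc (hpc.trans (hconn.eq_of_parentEdge_eq hc hv h).symm)
  exact R.max_rule t _ _ _ i₁ i₂ v (hconn.parentEdge_mem_edgeSet hc₁)
    (hconn.parentEdge_mem_edgeSet hc₂) (hconn.parentEdge_mem_edgeSet hv) hi₁ hi₂ hnone hlt
    (hp₁ ▸ parent_mem_parentEdge) (hp₂ ▸ parent_mem_parentEdge) mem_parentEdge_self
    (fun h => h₁₂ (hconn.eq_of_parentEdge_eq hc₁ hc₂ h)) (hup c₁ hc₁ hp₁) (hup c₂ hc₂ hp₂)

end Round

section Initial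

variable (hT : T.IsTrivalent)
include hT

lemma lab_zero_up_leaf {i : Fin (n+3)} (hi : i ≠ 0) : R.lab 0 (up (T.leaf i)) = some i :=
  R.init_leaf i _ (hT.isTree.connected.adj_parent (hT.leaf_ne_root hi))

variable (hab : T.ABAdj)
include hab

lemma lab_zero_up_parent_leaf_one : R.lab 0 (up (par (T.leaf 1))) = some 0 := by
  rw [parentEdge, hT.parent_parent_leaf_one hab, Sym2.eq_swap]
  exact R.init_leaf 0 _ (hT.adj_root_parent_leaf_one hab)

lemma lab_zero_up_eq_none {v : Fin (2*n+4)} (hv : v ≠ ρ) (hw : v ≠ par (T.leaf 1))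
    (hl : ∀ i, T.leaf i ≠ v) : R.lab 0 (up v) = none := by
  refine R.init_other _ fun i hi => ?_
  rcases Sym2.mem_iff.mp hi with h | h
  · exact hl i h
  · by_cases hp : par v = ρ
    · exact hw (hT.eq_parent_leaf_one_of_adj_root hab
        (hp ▸ hT.isTree.connected.adj_parent hv).symm)
    · exact hT.parent_ne_leaf hv hp i h.symm

end Initial

/-- Label `0` never leaves the edge at `a`, and every other label `i` occupies the first `K`
edges of the path from the leaf `i` to `a`; an edge is named by its endpoint farther from `a`. -/
def Invariant (t : ℕ) : Prop :=
  (∀ v, v ≠ ρ → (R.lab t (up v) = some 0 ↔ v = par (T.leaf 1))) ∧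
  ∀ i : Fin (n+3), i ≠ 0 → ∃ K, 1 ≤ K ∧ K < T.G.dist ρ (T.leaf i) ∧
    ∀ v, v ≠ ρ → (R.lab t (up v) = some i ↔ ∃ k < K, par^[k] (T.leaf i) = v)

lemma invariant_zero (hT : T.IsTrivalent) (hab : T.ABAdj) : R.Invariant 0 := by
  have key : ∀ v, v ≠ ρ → ∀ i, R.lab 0 (up v) = some i ↔
      (i = 0 ∧ v = par (T.leaf 1)) ∨ (i ≠ 0 ∧ T.leaf i = v) := by
    intro v hv i
    by_cases hw : v = par (T.leaf 1)
    · subst hw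
      rw [R.lab_zero_up_parent_leaf_one hT hab]
      have := (hT.parent_leaf_one_ne_leaf hab i).symm
      aesop
    by_cases hl : ∃ j, T.leaf j = v
    · obtain ⟨j, rfl⟩ := hl
      have hj : j ≠ 0 := by rintro rfl; exact hv rfl
      rw [R.lab_zero_up_leaf hT hj, hT.leaf_injective.eq_iff]
      aesop
    · simp only [not_exists] at hl
      rw [R.lab_zero_up_eq_none hT hab hv hw hl]
      simp [hw, hl i]
  refine ⟨fun v hv => by simpa using key v hv 0, fun i hi =>
    ⟨1, le_rfl, hT.one_lt_dist_leaf hab hi, fun v hv => by simp [key v hv, hi]⟩⟩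

section Preservation

variable {R}

namespace Invariant

variable {t : ℕ} (hT : T.IsTrivalent) (hI : R.Invariant t)
include hT hI

lemma lab_up_leaf {i : Fin (n+3)} (hi : i ≠ 0) : R.lab t (up (T.leaf i)) = some i := by
  obtain ⟨K, hK, -, hiff⟩ := hI.2 i hi
  exact (hiff _ (hT.leaf_ne_root hi)).mpr ⟨0, hK, rfl⟩

lemma eq_of_parent_eq {c₁ c₂ : Fin (2*n+4)} (hc₁ : c₁ ≠ ρ) (hc₂ : c₂ ≠ ρ) {i : Fin (n+3)}
    (h₁ : R.lab t (up c₁) = some i) (h₂ : R.lab t (up c₂) = some i) (hp : par c₁ = par c₂) :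
    c₁ = c₂ := by
  by_cases hi : i = 0
  · subst hi
    exact ((hI.1 c₁ hc₁).mp h₁).trans ((hI.1 c₂ hc₂).mp h₂).symm
  obtain ⟨K, -, hKd, hiff⟩ := hI.2 i hi
  obtain ⟨k₁, hk₁, rfl⟩ := (hiff c₁ hc₁).mp h₁
  obtain ⟨k₂, hk₂, rfl⟩ := (hiff _ hc₂).mp h₂
  simp only [← Function.iterate_succ_apply'] at hp
  have := hT.isTree.connected.eq_of_iterate_parent_eq (by omega) (by omega) hp
  rw [Nat.succ_inj.mp this]

lemma exists_child {v : Fin (2*n+4)} (hv : v ≠ ρ) {i : Fin (n+3)} (hi : i ≠ 0)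
    (h : R.lab t (up v) = some i) (hvl : v ≠ T.leaf i) :
    ∃ c, c ≠ ρ ∧ par c = v ∧ R.lab t (up c) = some i := by
  obtain ⟨K, -, hKd, hiff⟩ := hI.2 i hi
  obtain ⟨_ | k, hk, rfl⟩ := (hiff v hv).mp h
  · exact absurd rfl hvl
  refine ⟨par^[k] (T.leaf i), hT.isTree.connected.iterate_parent_ne_root (by omega),
    (Function.iterate_succ_apply' _ _ _).symm, (hiff _ ?_).mpr ⟨k, by omega, rfl⟩⟩
  exact hT.isTree.connected.iterate_parent_ne_root (by omega)

lemma two_le_of_parent_unlabeled (hab : T.ABAdj) {c : Fin (2*n+4)} (hc : c ≠ ρ)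
    (hpc : par c ≠ ρ) {i : Fin (n+3)} (h : R.lab t (up c) = some i)
    (hnone : R.lab t (up (par c)) = none) : 2 ≤ (i : ℕ) := by
  have hi0 : i ≠ 0 := by
    rintro rfl
    rw [(hI.1 c hc).mp h, hT.parent_parent_leaf_one hab] at hpc
    exact hpc rfl
  have hi1 : i ≠ 1 := by
    rintro rfl
    obtain ⟨K, hK, hKd, hiff⟩ := hI.2 1 (by simp)
    rw [hT.dist_leaf_one hab] at hKd
    obtain ⟨k, hk, rfl⟩ := (hiff c hc).mp h
    obtain rfl : k = 0 := by omega
    rw [Function.iterate_zero_apply, (hI.1 _ (hT.parent_leaf_one_ne_root hab)).mpr rfl] at hnone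
    simp at hnone
  rcases i with ⟨_ | _ | i, hi⟩
  · exact absurd rfl hi0
  · exact absurd rfl hi1
  · simp

end Invariant

lemma lab_succ_up_of_ne (hT : T.IsTrivalent) (t : Fin n) (hadv : R.newE t = up (R.vtx t))
    {u : Fin (2*n+4)} (hu : u ≠ ρ) (hne : u ≠ R.vtx t) : R.lab (t.1+1) (up u) = R.lab t (up u) :=
  R.step_frame t _ fun h =>
    hne (hT.isTree.connected.eq_of_parentEdge_eq hu (R.vtx_ne_root hT t) (h.trans hadv))

section Step

variable (hT : T.IsTrivalent) (hab : T.ABAdj) (t : Fin n) (hI : R.Invariant t)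
include hT hab hI

/-- A deepest unlabeled edge sits below two labeled edges whose labels are distinct and `≥ 2`,
so the maximality rule forces the loser to be `≥ 2`. -/
lemma Invariant.two_le_loser : 2 ≤ (R.loser t : ℕ) := by
  obtain ⟨v, hv, hvnone, hchild⟩ := R.exists_deepest_unlabeled hT t
  have hdeg : 2 < T.G.degree v := by
    rcases hT.degree_eq_one_or_three v with h | h
    · obtain ⟨i, rfl⟩ := hT.exists_leaf_of_degree_eq_one h
      rw [hI.lab_up_leaf hT fun hi => hv (hi ▸ rfl)] at hvnone
      simp at hvnone
    · omega
  obtain ⟨c₁, c₂, h₁₂, hc₁, hc₂, hp₁, hp₂⟩ := hT.isTree.exists_two_children (r := ρ) hdeg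
  obtain ⟨i₁, hi₁⟩ := Option.ne_none_iff_exists'.mp (hchild c₁ hc₁ hp₁)
  obtain ⟨i₂, hi₂⟩ := Option.ne_none_iff_exists'.mp (hchild c₂ hc₂ hp₂)
  have h2₁ := hI.two_le_of_parent_unlabeled hT hab hc₁ (hp₁ ▸ hv) hi₁ (hp₁ ▸ hvnone)
  have h2₂ := hI.two_le_of_parent_unlabeled hT hab hc₂ (hp₂ ▸ hv) hi₂ (hp₂ ▸ hvnone)
  have hne : i₁ ≠ i₂ := by
    rintro rfl
    exact h₁₂ (hI.eq_of_parent_eq hT hc₁ hc₂ hi₁ hi₂ (hp₁.trans hp₂.symm))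
  rcases lt_or_gt_of_ne hne with h | h
  · exact h2₁.trans (R.le_loser_of_parent_eq hT t hv hc₁ hc₂ h₁₂ hp₁ hp₂ hi₁ hi₂ h hvnone)
  · exact h2₂.trans (R.le_loser_of_parent_eq hT t hv hc₂ hc₁ h₁₂.symm hp₂ hp₁ hi₂ hi₁ h hvnone)

lemma Invariant.newE_eq_parentEdge : R.newE t = up (R.vtx t) := by
  have hconn := hT.isTree.connected
  have hv := R.vtx_ne_root hT t
  have hlw : R.loser t ≠ R.winner t := (R.lt_lw t).ne
  by_contra hne
  obtain ⟨i, hi⟩ : ∃ i, R.lab t (up (R.vtx t)) = some i := by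
    rcases R.eq_loserE_or_eq_winnerE_or_eq_newE hT t (hconn.parentEdge_mem_edgeSet hv)
      mem_parentEdge_self with h | h | h
    · exact ⟨_, h ▸ R.lab_loserE t⟩
    · exact ⟨_, h ▸ R.lab_winnerE t⟩
    · exact absurd h.symm hne
  have hi0 : i ≠ 0 := by
    have hl2 := hI.two_le_loser hT hab t
    have hw2 : 2 ≤ (R.winner t : ℕ) := hl2.trans (R.lt_lw t).le
    rcases R.lab_eq_loser_or_winner hT t (hconn.parentEdge_mem_edgeSet hv) mem_parentEdge_self hi
      with ⟨-, rfl⟩ | ⟨-, rfl⟩ <;> intro h0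
    · simp [h0] at hl2
    · simp [h0] at hw2
  obtain ⟨c, hc, hpc, hci⟩ := hI.exists_child hT hv hi0 hi (R.vtx_ne_leaf hT t i)
  -- both the parent edge and a child edge of `vtx t` would carry `i`, but the two labeled
  -- edges there carry the distinct labels `loser t` and `winner t`
  have hcv : up c = up (R.vtx t) := by
    rcases R.lab_eq_loser_or_winner hT t (hconn.parentEdge_mem_edgeSet hc)
        (hpc ▸ parent_mem_parentEdge) hci with ⟨h₁, rfl⟩ | ⟨h₁, rfl⟩ <;>
      rcases R.lab_eq_loser_or_winner hT t (hconn.parentEdge_mem_edgeSet hv) mem_parentEdge_self hi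
        with ⟨h₂, h⟩ | ⟨h₂, h⟩
    all_goals first | exact h₁.trans h₂.symm | exact absurd h (by simpa [eq_comm] using hlw)
  exact hconn.parent_ne hc (hpc.trans (hconn.eq_of_parentEdge_eq hc hv hcv).symm)

lemma Invariant.exists_advancing_label : ∃ (L : Fin (n+3)) (c : Fin (2*n+4)), 2 ≤ (L : ℕ) ∧
    c ≠ ρ ∧ par c = R.vtx t ∧ R.lab t (up c) = some L ∧ R.lab (t.1+1) (R.newE t) = some L := by
  have hl2 := hI.two_le_loser hT hab t
  obtain ⟨L, E, hL2, hEmem, hvE, hEne, hE, hnew⟩ : ∃ (L : Fin (n+3)) (E : Sym2 (Fin (2*n+4))),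
      2 ≤ (L : ℕ) ∧ E ∈ T.G.edgeSet ∧ R.vtx t ∈ E ∧ E ≠ R.newE t ∧ R.lab t E = some L ∧
      R.lab (t.1+1) (R.newE t) = some L := by
    by_cases h : LazyApplies T (R.lab t.1) (R.newE t) (R.loser t) (R.winner t)
    · exact ⟨_, _, hl2, R.loserE_mem t, (R.vtx_mem t).1, (R.edges_distinct t).2.1,
        R.lab_loserE t, R.step_lazy t h⟩
    · exact ⟨_, _, hl2.trans (R.lt_lw t).le, R.winnerE_mem t, (R.vtx_mem t).2.1,
        (R.edges_distinct t).2.2, R.lab_winnerE t, R.step_nonlazy t h⟩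
  rcases hT.isTree.eq_parentEdge_or_of_mem (r := ρ) hEmem hvE with h | ⟨c, hc, hpc, rfl⟩
  · exact absurd (h.trans (hI.newE_eq_parentEdge hT hab t).symm) hEne
  · exact ⟨L, c, hL2, hc, hpc, hE, hnew⟩

lemma Invariant.lab_up_vtx : R.lab t (up (R.vtx t)) = none :=
  hI.newE_eq_parentEdge hT hab t ▸ R.newE_unlabeled t

lemma Invariant.vtx_ne_parent_leaf_one : R.vtx t ≠ par (T.leaf 1) := fun h => by
  have := hI.lab_up_vtx hT hab t
  rw [(hI.1 _ (R.vtx_ne_root hT t)).mpr h] at this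
  simp at this

/-- The label written in round `t` sat on the top edge of its segment, just below `vtx t`. -/
lemma Invariant.exists_segment_top : ∃ (L : Fin (n+3)) (K : ℕ), L ≠ 0 ∧
    R.lab (t.1+1) (up (R.vtx t)) = some L ∧ 1 ≤ K ∧ K + 1 < T.G.dist ρ (T.leaf L) ∧
    par^[K] (T.leaf L) = R.vtx t ∧
    ∀ v, v ≠ ρ → (R.lab t (up v) = some L ↔ ∃ k < K, par^[k] (T.leaf L) = v) := by
  have hconn := hT.isTree.connected
  have hv := R.vtx_ne_root hT t
  have hnone := hI.lab_up_vtx hT hab t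
  obtain ⟨L, c, hL2, hc, hpc, hcL, hnew⟩ := hI.exists_advancing_label hT hab t
  have hL0 : L ≠ 0 := by rintro rfl; simp at hL2
  obtain ⟨K, hK, hKd, hiff⟩ := hI.2 L hL0
  have htop : par^[K] (T.leaf L) = R.vtx t := by
    obtain ⟨k, hk, rfl⟩ := (hiff c hc).mp hcL
    have hk' : k + 1 = K := by
      by_contra h
      have := (hiff _ hv).mpr ⟨k+1, by omega, by rw [Function.iterate_succ_apply', hpc]⟩
      rw [hnone] at this
      simp at this
    rw [← hk', Function.iterate_succ_apply', hpc]
  refine ⟨L, K, hL0, hI.newE_eq_parentEdge hT hab t ▸ hnew, hK, ?_, htop, hiff⟩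
  have h1 := hconn.dist_iterate_parent (v := T.leaf L) hKd.le
  rw [htop] at h1
  have h2 : par (R.vtx t) ≠ ρ := fun h => hI.vtx_ne_parent_leaf_one hT hab t
    (hT.eq_parent_leaf_one_of_adj_root hab (h ▸ (hconn.adj_parent hv).symm))
  have h3 := hconn.dist_parent hv
  have h4 := hconn.pos_dist_of_ne (Ne.symm h2)
  omega

lemma Invariant.succ : R.Invariant (t.1+1) := by
  obtain ⟨L, K, hL0, hnew, hK, hK', htop, hiff⟩ := hI.exists_segment_top hT hab t
  have hnone := hI.lab_up_vtx hT hab t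
  have hframe := fun u (hu : u ≠ ρ) hne =>
    R.lab_succ_up_of_ne hT t (hI.newE_eq_parentEdge hT hab t) hu hne
  refine ⟨fun u hu => ?_, fun i hi => ?_⟩
  · by_cases huv : u = R.vtx t
    · subst huv
      simp [hnew, hL0, hI.vtx_ne_parent_leaf_one hT hab t]
    · rw [hframe u hu huv]
      exact hI.1 u hu
  by_cases hiL : i = L
  · subst hiL
    refine ⟨K + 1, by omega, hK', fun u hu => ?_⟩
    by_cases huv : u = R.vtx t
    · subst huv
      simp only [hnew, true_iff]
      exact ⟨K, by omega, htop⟩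
    · rw [hframe u hu huv, hiff u hu]
      constructor
      · rintro ⟨k, hk, rfl⟩
        exact ⟨k, by omega, rfl⟩
      · rintro ⟨k, hk, rfl⟩
        refine ⟨k, lt_of_le_of_ne (by omega) ?_, rfl⟩
        rintro rfl
        exact huv htop
  · obtain ⟨Ki, hKi, hKid, hiffi⟩ := hI.2 i hi
    refine ⟨Ki, hKi, hKid, fun u hu => ?_⟩
    by_cases huv : u = R.vtx t
    · subst huv
      rw [hnew, ← hiffi _ hu, hnone]
      simp [Ne.symm hiL]
    · rw [hframe u hu huv]
      exact hiffi u hu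

end Step

end Preservation

variable (hT : T.IsTrivalent) (hab : T.ABAdj)
include hT hab

lemma invariant {t : ℕ} (ht : t ≤ n) : R.Invariant t := by
  induction t with
  | zero => exact R.invariant_zero hT hab
  | succ t ih => exact (ih (by omega)).succ hT hab ⟨t, by omega⟩

lemma two_le_loser (t : Fin n) : 2 ≤ (R.loser t : ℕ) :=
  (R.invariant hT hab t.2.le).two_le_loser hT hab t

lemma newE_eq_parentEdge (t : Fin n) : R.newE t = up (R.vtx t) :=
  (R.invariant hT hab t.2.le).newE_eq_parentEdge hT hab t

/-- Label `i` competes in the round that labels the edge just above the leaf edge of `i`. -/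
lemma exists_round_competes (hn : 1 ≤ n) {i : Fin (n+3)} (hi0 : i ≠ 0) (hi1 : i ≠ 1) :
    ∃ t, R.loser t = i ∨ R.winner t = i := by
  have hconn := hT.isTree.connected
  have hℓ := hT.leaf_ne_root hi0
  have hw := hT.parent_leaf_ne_parent_leaf_one hab hn hi0 hi1
  have hv : par (T.leaf i) ≠ ρ := fun h => hT.parent_leaf_one_ne_leaf hab i
    (hT.eq_parent_leaf_one_of_adj_root hab (h ▸ (hconn.adj_parent hℓ).symm)).symm
  have h0 := R.lab_zero_up_eq_none hT hab hv hw fun m h => hT.parent_ne_leaf hℓ hv m h.symm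
  obtain ⟨t, ht⟩ := R.exists_newE_eq hT (hconn.parentEdge_mem_edgeSet hv) h0
  have hvt : R.vtx t = par (T.leaf i) := hconn.eq_of_parentEdge_eq (R.vtx_ne_root hT t) hv
    ((R.newE_eq_parentEdge hT hab t).symm.trans ht)
  rcases R.lab_eq_loser_or_winner hT t (hconn.parentEdge_mem_edgeSet hℓ)
      (hvt ▸ parent_mem_parentEdge) ((R.invariant hT hab t.2.le).lab_up_leaf hT hi0)
    with ⟨-, h⟩ | ⟨-, h⟩
  · exact ⟨t, .inl h.symm⟩
  · exact ⟨t, .inr h.symm⟩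

end Run

/-- **Participation Lemma.** In the lazy tournament of a trivalent tree whose
leaf edges `a`, `b` share a vertex (`n ≥ 1`): neither `a` nor `b` ever competes, every other
label competes in some round, and a label always advances along its path toward the leaf `a`
(the newly labeled edge lies on the path from the current vertex to `a`). -/
theorem participation (n : ℕ) (hn : 1 ≤ n) (T : PreTree (n+3) (2*n+4))
    (hT : T.IsTrivalent) (hab : T.ABAdj) (R : Run n T) :
    (∀ t : Fin n, R.loser t ≠ 0 ∧ R.winner t ≠ 0 ∧ R.loser t ≠ 1 ∧ R.winner t ≠ 1) ∧
    (∀ i : Fin (n+3), i ≠ 0 → i ≠ 1 → ∃ t : Fin n, R.loser t = i ∨ R.winner t = i) ∧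
    (∀ t : Fin n, ∀ p : T.G.Walk (R.vtx t) (T.leaf 0), p.IsPath → R.newE t ∈ p.edges) := by
  refine ⟨fun t => ?_, fun i hi0 hi1 => R.exists_round_competes hT hab hn hi0 hi1,
    fun t p hp => ?_⟩
  · have hl := R.two_le_loser hT hab t
    have hw : 2 ≤ (R.winner t : ℕ) := hl.trans (R.lt_lw t).le
    refine ⟨?_, ?_, ?_, ?_⟩ <;> intro h <;> simp [h] at hl hw
  · rw [R.newE_eq_parentEdge hT hab t]
    exact hT.isTree.parentEdge_mem_edges (R.vtx_ne_root hT t) hp
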